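/- Let p : [0,1] → ℝ be nonnegative, integrable, symmetric about 1/2 (p(1-t) = p(t)), and non-decreasing on [0,1/2]. Then for every convex function f : [0,1] → ℝ, ∫₀¹ p(t)·f(t) dt ≤ (∫₀¹ p(t) dt)·(∫₀¹ f(t) dt). -/

import Mathlib

/-!
Replacing `p` by `q = p - ∫ p`, the claim is `∫₀¹ q f ≤ 0` for a weight `q` that is symmetric,
non-decreasing on `[0, 1/2]` and of integral zero. Since `q` is symmetric, `f` may be replaced by
its symmetrization `g(t) = f t + f (1 - t)`, which is convex and symmetric, hence non-increasing on
`[0, 1/2]`; and both integrals fold onto `[0, 1/2]`. There `q` changes sign once, from `-` to `+`,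
at some `c`, so `q t * g t ≤ q t * g c` pointwise, and integrating gives `∫ q g ≤ g c * ∫ q = 0`.
-/

open MeasureTheory Set intervalIntegral

theorem ConvexOn.comp_const_sub {s : Set ℝ} {f : ℝ → ℝ} (hf : ConvexOn ℝ s f) (c : ℝ) :
    ConvexOn ℝ ((c - ·) ⁻¹' s) (fun t => f (c - t)) :=
  hf.comp_affineMap (AffineMap.const ℝ ℝ c - AffineMap.id ℝ ℝ)

section

variable {a b : ℝ}

theorem ConvexOn.antitoneOn_of_symm {f : ℝ → ℝ} (hf : ConvexOn ℝ (Icc a b) f)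
    (hsymm : ∀ t ∈ Icc a b, f (a + b - t) = f t) : AntitoneOn f (Icc a ((a + b) / 2)) := by
  intro x hx y hy hxy
  have hx_mem : x ∈ Icc a b := ⟨hx.1, by linarith [hx.2, hy.1, hy.2]⟩
  have hx'_mem : a + b - x ∈ Icc a b := ⟨by linarith [hx_mem.2], by linarith [hx.1]⟩
  calc f y ≤ max (f x) (f (a + b - x)) :=
        hf.le_max_of_mem_Icc hx_mem hx'_mem ⟨hxy, by linarith [hy.2]⟩
    _ = f x := by rw [hsymm x hx_mem, max_self]

theorem intervalIntegral.integral_comp_add_sub (h : ℝ → ℝ) :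
    ∫ t in a..b, h (a + b - t) = ∫ t in a..b, h t := by
  simp [integral_comp_sub_left]

theorem IntervalIntegrable.comp_add_sub {h : ℝ → ℝ} (hh : IntervalIntegrable h volume a b) :
    IntervalIntegrable (fun t => h (a + b - t)) volume a b := by
  simpa using (hh.comp_sub_left (a + b)).symm

theorem intervalIntegral.integral_eq_two_mul_integral_of_symm {h : ℝ → ℝ} (hab : a ≤ b)
    (hsymm : ∀ t ∈ Icc a b, h (a + b - t) = h t) (hh : IntervalIntegrable h volume a b) :
    ∫ t in a..b, h t = 2 * ∫ t in a..(a + b) / 2, h t := by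
  have hm : (a + b) / 2 ∈ uIcc a b := by
    rw [uIcc_of_le hab]; constructor <;> linarith
  have h_upper : ∫ t in (a + b) / 2..b, h t = ∫ t in a..(a + b) / 2, h t := by
    calc ∫ t in (a + b) / 2..b, h t = ∫ t in a..(a + b) / 2, h (a + b - t) := by
          rw [integral_comp_sub_left]; congr 1 <;> ring
      _ = ∫ t in a..(a + b) / 2, h t := by
          refine integral_congr fun t ht => hsymm t ?_
          rw [uIcc_of_le (by linarith)] at ht
          exact ⟨ht.1, by linarith [ht.2]⟩
  rw [← integral_add_adjacent_intervals (hh.mono_set (uIcc_subset_uIcc_left hm))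
    (hh.mono_set (uIcc_subset_uIcc_right hm)), h_upper, two_mul]

theorem intervalIntegral.integral_mul_comp_add_sub_of_symm {q : ℝ → ℝ} (hab : a ≤ b)
    (hsymm : ∀ t ∈ Icc a b, q (a + b - t) = q t) (h : ℝ → ℝ) :
    ∫ t in a..b, q t * h (a + b - t) = ∫ t in a..b, q t * h t := by
  calc ∫ t in a..b, q t * h (a + b - t) = ∫ t in a..b, q (a + b - t) * h (a + b - t) :=
        integral_congr fun t ht => by rw [hsymm t (by rwa [uIcc_of_le hab] at ht)]
    _ = ∫ t in a..b, q t * h t := integral_comp_add_sub fun t => q t * h t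

theorem IntervalIntegrable.mul_comp_add_sub_of_symm {q h : ℝ → ℝ} (hab : a ≤ b)
    (hsymm : ∀ t ∈ Icc a b, q (a + b - t) = q t)
    (hqh : IntervalIntegrable (fun t => q t * h t) volume a b) :
    IntervalIntegrable (fun t => q t * h (a + b - t)) volume a b :=
  hqh.comp_add_sub.congr fun t ht => by
    rw [hsymm t (by rw [uIoc_of_le hab] at ht; exact Ioc_subset_Icc_self ht)]

theorem MonotoneOn.exists_sign_change {q : ℝ → ℝ} (hab : a ≤ b) (hq : MonotoneOn q (Icc a b)) :
    ∃ c ∈ Icc a b, ∀ t ∈ Icc a b, (t < c → q t ≤ 0) ∧ (c < t → 0 ≤ q t) := by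
  by_cases hS : ∃ t ∈ Icc a b, q t ≤ 0
  · set S := {t ∈ Icc a b | q t ≤ 0}
    obtain ⟨t₀, ht₀⟩ := hS
    have hS_bdd : BddAbove S := ⟨b, fun t ht => ht.1.2⟩
    refine ⟨sSup S, ⟨ht₀.1.1.trans (le_csSup hS_bdd ht₀), csSup_le ⟨t₀, ht₀⟩ fun t ht => ht.1.2⟩,
      fun t ht => ⟨fun htc => ?_, fun hct => ?_⟩⟩
    · obtain ⟨s, hs, hts⟩ := exists_lt_of_lt_csSup ⟨t₀, ht₀⟩ htc
      exact (hq ht hs.1 hts.le).trans hs.2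
    · by_contra! hneg
      exact (le_csSup hS_bdd ⟨ht, hneg.le⟩).not_gt hct
  · push Not at hS
    exact ⟨a, ⟨le_rfl, hab⟩, fun t ht => ⟨fun hta => absurd ht.1 (not_le.2 hta),
      fun _ => (hS t ht).le⟩⟩

theorem MonotoneOn.integral_mul_antitoneOn_nonpos {q g : ℝ → ℝ} (hab : a ≤ b)
    (hq : MonotoneOn q (Icc a b)) (hg : AntitoneOn g (Icc a b))
    (hq0 : ∫ t in a..b, q t = 0) (hq_int : IntervalIntegrable q volume a b)
    (hqg_int : IntervalIntegrable (fun t => q t * g t) volume a b) :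
    ∫ t in a..b, q t * g t ≤ 0 := by
  obtain ⟨c, hc, hsign⟩ := hq.exists_sign_change hab
  have hpointwise : ∀ t ∈ Icc a b, q t * g t ≤ g c * q t := by
    intro t ht
    rcases lt_trichotomy t c with htc | rfl | hct
    · nlinarith [(hsign t ht).1 htc, hg ht hc htc.le]
    · rw [mul_comm]
    · nlinarith [(hsign t ht).2 hct, hg hc ht hct.le]
  calc ∫ t in a..b, q t * g t ≤ ∫ t in a..b, g c * q t :=
        integral_mono_on hab hqg_int (hq_int.const_mul _) hpointwise
    _ = 0 := by rw [intervalIntegral.integral_const_mul, hq0, mul_zero]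

theorem ConvexOn.integral_mul_nonpos_of_symm {q f : ℝ → ℝ} (hab : a ≤ b)
    (hf : ConvexOn ℝ (Icc a b) f) (hq_symm : ∀ t ∈ Icc a b, q (a + b - t) = q t)
    (hq_mono : MonotoneOn q (Icc a ((a + b) / 2))) (hq0 : ∫ t in a..b, q t = 0)
    (hq_int : IntervalIntegrable q volume a b)
    (hqf_int : IntervalIntegrable (fun t => q t * f t) volume a b) :
    ∫ t in a..b, q t * f t ≤ 0 := by
  set g : ℝ → ℝ := fun t => f t + f (a + b - t)
  have hg_symm : ∀ t ∈ Icc a b, g (a + b - t) = g t := fun t _ => by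
    simp only [g, sub_sub_cancel, add_comm]
  have hg_anti : AntitoneOn g (Icc a ((a + b) / 2)) := by
    refine (hf.add ?_).antitoneOn_of_symm hg_symm
    simpa [preimage_const_sub_Icc] using hf.comp_const_sub (a + b)
  have hqfr_int := hqf_int.mul_comp_add_sub_of_symm hab hq_symm
  have hqg_int : IntervalIntegrable (fun t => q t * g t) volume a b := by
    simpa only [g, mul_add] using hqf_int.add hqfr_int
  have hqg_eq : ∫ t in a..b, q t * g t = 2 * ∫ t in a..b, q t * f t := by
    simp only [g, mul_add]
    rw [integral_add hqf_int hqfr_int, integral_mul_comp_add_sub_of_symm hab hq_symm, two_mul]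
  have hqg_fold := integral_eq_two_mul_integral_of_symm hab
    (fun t ht => by rw [hq_symm t ht, hg_symm t ht]) hqg_int
  have hq0_half : ∫ t in a..(a + b) / 2, q t = 0 := by
    linarith [integral_eq_two_mul_integral_of_symm hab hq_symm hq_int]
  have hsub : uIcc a ((a + b) / 2) ⊆ uIcc a b :=
    uIcc_subset_uIcc_left (by rw [uIcc_of_le hab]; constructor <;> linarith)
  have hhalf := hq_mono.integral_mul_antitoneOn_nonpos (by linarith) hg_anti hq0_half
    (hq_int.mono_set hsub) (hqg_int.mono_set hsub)
  linarith

end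

theorem levin_steckin_general (p f : ℝ → ℝ)
    (hpint : IntervalIntegrable p volume 0 1)
    (hpsym : ∀ t ∈ Icc (0:ℝ) 1, p (1 - t) = p t)
    (hpmono : MonotoneOn p (Icc (0:ℝ) (1 / 2)))
    (hf : ConvexOn ℝ (Icc (0:ℝ) 1) f)
    (hfint : IntervalIntegrable f volume 0 1)
    (hpfint : IntervalIntegrable (fun t => p t * f t) volume 0 1) :
    (∫ t in (0:ℝ)..1, p t * f t) ≤
      (∫ t in (0:ℝ)..1, p t) * (∫ t in (0:ℝ)..1, f t) := by
  set P := ∫ t in (0:ℝ)..1, p t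
  have hq_symm : ∀ t ∈ Icc (0:ℝ) 1, p (0 + 1 - t) - P = p t - P := fun t ht => by
    rw [zero_add, hpsym t ht]
  have hq_mono : MonotoneOn (fun t => p t - P) (Icc 0 ((0 + 1) / 2)) := by
    rw [zero_add]
    exact fun x hx y hy hxy => sub_le_sub_right (hpmono hx hy hxy) P
  have hq0 : ∫ t in (0:ℝ)..1, (p t - P) = 0 := by
    rw [integral_sub hpint intervalIntegrable_const, intervalIntegral.integral_const, sub_zero,
      one_smul, sub_self]
  have hqf_int : IntervalIntegrable (fun t => (p t - P) * f t) volume 0 1 := by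
    simpa only [sub_mul] using hpfint.sub (hfint.const_mul P)
  have hqf_eq : ∫ t in (0:ℝ)..1, (p t - P) * f t
      = (∫ t in (0:ℝ)..1, p t * f t) - P * ∫ t in (0:ℝ)..1, f t := by
    simp only [sub_mul]
    rw [integral_sub hpfint (hfint.const_mul P), intervalIntegral.integral_const_mul]
  have := hf.integral_mul_nonpos_of_symm zero_le_one hq_symm hq_mono hq0
    (hpint.sub intervalIntegrable_const) hqf_int
  linarith

theorem levin_steckin (p f : ℝ → ℝ)
    (hp0 : ∀ t ∈ Icc (0:ℝ) 1, 0 ≤ p t)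
    (hpint : IntervalIntegrable p volume 0 1)
    (hpsym : ∀ t ∈ Icc (0:ℝ) 1, p (1 - t) = p t)
    (hpmono : MonotoneOn p (Icc (0:ℝ) (1 / 2)))
    (hf : ConvexOn ℝ (Icc (0:ℝ) 1) f)
    (hfint : IntervalIntegrable f volume 0 1)
    (hpfint : IntervalIntegrable (fun t => p t * f t) volume 0 1) :
    (∫ t in (0:ℝ)..1, p t * f t) ≤
      (∫ t in (0:ℝ)..1, p t) * (∫ t in (0:ℝ)..1, f t) :=
  levin_steckin_general p f hpint hpsym hpmono hf hfint hpfint
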